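/- Let C be a pre-additive category with a Lawvere metric and let Ỹ : C → Mod-C be the additive Yoneda embedding. If E₁ → E₂ → ⋯ is a Cauchy sequence in C and F = colim Ỹ(E_i) in Mod-C, then for any compactly supported object G ∈ Mod-C, Hom(F, G) ≅ lim Hom(Ỹ(E_i), G) ≅ lim G(E_i), and this inverse limit is attained at a finite stage: Hom(F, G) ≅ G(E_i) for all sufficiently large i. -/

import Mathlib

open CategoryTheory CategoryTheory.Limits

universe w v u

/-- A Lawvere metric on a category `C`: a nonnegative length for every morphism,
with `Length(id) = 0` and the triangle inequality. -/
structure LawvereMetric (C : Type u) [Category.{v} C] where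
  length : ∀ {a b : C}, (a ⟶ b) → ℝ
  length_nonneg : ∀ {a b : C} (f : a ⟶ b), 0 ≤ length f
  length_id : ∀ x : C, length (𝟙 x) = 0
  length_comp : ∀ {a b c : C} (f : a ⟶ b) (g : b ⟶ c),
    length (f ≫ g) ≤ length f + length g

/-- Two Lawvere metrics are equivalent if morphisms short in one are short in the other,
in both directions. -/
def LawvereMetric.Equivalent {C : Type u} [Category.{v} C]
    (L₁ L₂ : LawvereMetric C) : Prop :=
  ∀ ε : ℝ, 0 < ε → ∃ δ : ℝ, 0 < δ ∧
    (∀ {a b : C} (f : a ⟶ b), L₁.length f < δ → L₂.length f < ε) ∧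
    (∀ {a b : C} (f : a ⟶ b), L₂.length f < δ → L₁.length f < ε)

/-- A sequence of composable morphisms (a functor `ℕ ⥤ C`) is Cauchy. -/
def LawvereMetric.IsCauchy {C : Type u} [Category.{v} C] (L : LawvereMetric C)
    (E : ℕ ⥤ C) : Prop :=
  ∀ ε : ℝ, 0 < ε → ∃ M : ℕ, ∀ i j : ℕ, (h : i ≤ j) → M < i →
    L.length (E.map (homOfLE h)) < ε

/-- An object `G` of `Mod-C` is compactly supported if it inverts all sufficiently
short morphisms. -/
def LawvereMetric.CompactlySupportedAdd {C : Type u} [Category.{v} C] [Preadditive C]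
    (L : LawvereMetric C) (G : Cᵒᵖ ⥤ AddCommGrpCat.{v}) : Prop :=
  ∃ ε : ℝ, 0 < ε ∧ ∀ {a b : C} (f : a ⟶ b), L.length f < ε → IsIso (G.map f.op)

/-!
Once the transition maps of the Cauchy sequence are shorter than the support radius of `G`,
`G` inverts them, so by the additive Yoneda lemma precomposition with `Ỹ(E_i ⟶ E_j)` is a
bijection `Hom(Ỹ E_j, G) ≃ Hom(Ỹ E_i, G)`. A morphism out of `Ỹ E_i` therefore extends uniquely
to every later stage, hence to a unique compatible family, i.e. a unique morphism out of the
colimit.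
-/

open Opposite

namespace CategoryTheory

section PreadditiveYoneda

variable {C : Type u} [Category.{v} C] [Preadditive C] (G : Cᵒᵖ ⥤ AddCommGrpCat.{v})

lemma preadditiveYoneda_obj_hom_app_apply {Y : C} (η : preadditiveYoneda.obj Y ⟶ G) {X : C}
    (g : X ⟶ Y) : η.app (op X) g = G.map g.op (η.app (op Y) (𝟙 Y)) := by
  have h := NatTrans.naturality_apply η g.op (𝟙 Y)
  rwa [show (preadditiveYoneda.obj Y).map g.op (𝟙 Y) = g from Category.comp_id g] at h

variable [G.Additive]

def preadditiveYonedaEquiv (Y : C) : (preadditiveYoneda.obj Y ⟶ G) ≃ G.obj (op Y) where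
  toFun η := η.app (op Y) (𝟙 Y)
  invFun x :=
    { app X := AddCommGrpCat.ofHom (AddMonoidHom.mk' (fun g : X.unop ⟶ Y => G.map g.op x)
        fun g g' : X.unop ⟶ Y => by
          change G.map (g + g').op x = _
          rw [op_add, G.map_add]
          rfl)
      naturality X X' h := by
        refine AddCommGrpCat.ext fun (g : X.unop ⟶ Y) => ?_
        change G.map (h.unop ≫ g).op x = G.map h (G.map g.op x)
        rw [op_comp, G.map_comp, Quiver.Hom.op_unop]
        rfl }
  left_inv η := by
    ext X g
    exact (preadditiveYoneda_obj_hom_app_apply G η g).symm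
  right_inv x := by
    change G.map (𝟙 Y).op x = x
    simp

lemma preadditiveYonedaEquiv_map_comp {X Y : C} (f : X ⟶ Y) (η : preadditiveYoneda.obj Y ⟶ G) :
    preadditiveYonedaEquiv G X (preadditiveYoneda.map f ≫ η) =
      G.map f.op (preadditiveYonedaEquiv G Y η) := by
  change η.app (op X) (𝟙 X ≫ f) = _
  rw [Category.id_comp, preadditiveYoneda_obj_hom_app_apply]
  rfl

lemma bijective_preadditiveYoneda_map_comp {X Y : C} (f : X ⟶ Y) [IsIso (G.map f.op)] :
    Function.Bijective (preadditiveYoneda.map f ≫ · : (preadditiveYoneda.obj Y ⟶ G) → _) := by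
  have : (preadditiveYoneda.map f ≫ · : (preadditiveYoneda.obj Y ⟶ G) → _) =
      (preadditiveYonedaEquiv G X).symm ∘ G.map f.op ∘ preadditiveYonedaEquiv G Y := by
    funext η
    simp [Equiv.eq_symm_apply, preadditiveYonedaEquiv_map_comp]
  rw [this]
  exact (preadditiveYonedaEquiv G X).symm.bijective.comp
    ((ConcreteCategory.bijective_of_isIso _).comp (preadditiveYonedaEquiv G Y).bijective)

end PreadditiveYoneda

section Sequential

variable {A : Type*} [Category A] {D : ℕ ⥤ A} {c : Cocone D} {X : A} {i : ℕ}

lemma injective_cocone_ι_app_comp_of_bijective_map_comp (hc : IsColimit c)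
    (hD : ∀ j (hij : i ≤ j), Function.Bijective (D.map (homOfLE hij) ≫ · : (D.obj j ⟶ X) → _)) :
    Function.Injective (c.ι.app i ≫ · : (c.pt ⟶ X) → _) := by
  intro φ ψ h
  have h_ge : ∀ j, i ≤ j → c.ι.app j ≫ φ = c.ι.app j ≫ ψ := fun j hij =>
    (hD j hij).1 (by simpa only [Cocone.w_assoc] using h)
  refine hc.hom_ext fun j => ?_
  rw [← c.w (homOfLE (le_max_right i j)), Category.assoc, Category.assoc,
    h_ge _ (le_max_left i j)]

lemma surjective_cocone_ι_app_comp_of_bijective_map_comp (hc : IsColimit c)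
    (hD : ∀ j (hij : i ≤ j), Function.Bijective (D.map (homOfLE hij) ≫ · : (D.obj j ⟶ X) → _)) :
    Function.Surjective (c.ι.app i ≫ · : (c.pt ⟶ X) → _) := by
  intro η
  let θ (j : ℕ) (hij : i ≤ j) : D.obj j ⟶ X := (Equiv.ofBijective _ (hD j hij)).symm η
  have hθ : ∀ j (hij : i ≤ j), D.map (homOfLE hij) ≫ θ j hij = η := fun j hij =>
    (Equiv.ofBijective _ (hD j hij)).apply_symm_apply η
  have θ_compat : ∀ j k (hij : i ≤ j) (hjk : j ≤ k),
      D.map (homOfLE hjk) ≫ θ k (hij.trans hjk) = θ j hij := fun j k hij hjk =>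
    (hD j hij).1 (by dsimp only; rw [← Functor.map_comp_assoc, homOfLE_comp, hθ, hθ])
  let ψ (j : ℕ) : D.obj j ⟶ X := D.map (homOfLE (le_max_right i j)) ≫ θ _ (le_max_left i j)
  have ψ_compat : ∀ j k (f : j ⟶ k), D.map f ≫ ψ k = ψ j := fun j k f => by
    simp only [ψ, ← θ_compat (max i j) (max i k) (le_max_left i j)
      (max_le_max_left i (leOfHom f)), ← Functor.map_comp_assoc]
    rfl
  let s : Cocone D := ⟨X, ⟨ψ, fun j k f => by simpa using ψ_compat j k f⟩⟩
  exact ⟨hc.desc s, (hc.fac s i).trans (hθ _ _)⟩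

end Sequential

end CategoryTheory

theorem hom_from_colimit_of_cauchy_general {C : Type u} [Category.{v} C] [Preadditive C]
    (L : LawvereMetric C) (E : ℕ ⥤ C) (hE : L.IsCauchy E)
    (G : Cᵒᵖ ⥤ AddCommGrpCat.{v}) [G.Additive] (hG : L.CompactlySupportedAdd G) :
    ∃ M : ℕ, ∀ i : ℕ, M < i →
      Function.Bijective
        (fun φ : (colimit (E ⋙ preadditiveYoneda) ⟶ G) =>
          colimit.ι (E ⋙ preadditiveYoneda) i ≫ φ) ∧
      Nonempty ((colimit (E ⋙ preadditiveYoneda) ⟶ G) ≃ G.obj (Opposite.op (E.obj i))) := by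
  obtain ⟨ε, hε, hG_short⟩ := hG
  obtain ⟨M, hM⟩ := hE ε hε
  refine ⟨M, fun i hi => ?_⟩
  have hmap : ∀ j (hij : i ≤ j), Function.Bijective
      ((E ⋙ preadditiveYoneda).map (homOfLE hij) ≫ · : (_ ⟶ G) → _) := fun j hij =>
    have := hG_short _ (hM i j hij hi)
    bijective_preadditiveYoneda_map_comp G (E.map (homOfLE hij))
  have hbij : Function.Bijective (colimit.ι (E ⋙ preadditiveYoneda) i ≫ · : (_ ⟶ G) → _) :=
    ⟨injective_cocone_ι_app_comp_of_bijective_map_comp (colimit.isColimit _) hmap,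
      surjective_cocone_ι_app_comp_of_bijective_map_comp (colimit.isColimit _) hmap⟩
  exact ⟨hbij, ⟨(Equiv.ofBijective _ hbij).trans (preadditiveYonedaEquiv G (E.obj i))⟩⟩

/-- Let `Ỹ : C ⥤ Mod-C` be the additive Yoneda embedding, `E` a Cauchy sequence in `C`
and `F = colim Ỹ(E_i)` in `Mod-C`. For any compactly supported `G ∈ Mod-C` we have
`Hom(F, G) ≅ lim Hom(Ỹ(E_i), G) ≅ lim G(E_i)`, and the limit is attained at a finite
stage: for all sufficiently large `i` the canonical map
`Hom(F, G) ⟶ Hom(Ỹ(E_i), G)`, given by composition with the colimit coprojection,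
is bijective, so that `Hom(F, G) ≅ G(E_i)` by Yoneda. -/
theorem hom_from_colimit_of_cauchy {C : Type u} [Category.{v} C] [Preadditive C]
    [HasColimitsOfShape ℕ AddCommGrpCat.{v}]
    (L : LawvereMetric C) (E : ℕ ⥤ C) (hE : L.IsCauchy E)
    (G : Cᵒᵖ ⥤ AddCommGrpCat.{v}) [G.Additive] (hG : L.CompactlySupportedAdd G) :
    ∃ M : ℕ, ∀ i : ℕ, M < i →
      Function.Bijective
        (fun φ : (colimit (E ⋙ preadditiveYoneda) ⟶ G) =>
          colimit.ι (E ⋙ preadditiveYoneda) i ≫ φ) ∧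
      Nonempty ((colimit (E ⋙ preadditiveYoneda) ⟶ G) ≃ G.obj (Opposite.op (E.obj i))) :=
  hom_from_colimit_of_cauchy_general L E hE G hG
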